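/- arXiv:0704.2649 — 5 statements merged into one kernel-verified Lean document; each statement's English description precedes it below -/
import Mathlib

section
/- For every leaf i ∈ X, the heightened evolutionary distinctiveness satisfies ψ_i = Σ_{e ∈ E with i ∈ C(e)} l(e) · ∏_{j ∈ C(e) ∖ {i}} ε_j (where an empty product equals 1). (Theorem 1: formula for the rooted HED index.) -/
open Finset

/-- Rooted phylogenetic diversity: the sum of the lengths of edges `e` whose
clade `C e` meets `S`. -/
noncomputable def PD {X E : Type*} [Fintype E] [DecidableEq X]
    (l : E → ℝ) (C : E → Finset X) (S : Finset X) : ℝ :=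
  ∑ e ∈ univ.filter (fun e => (C e ∩ S).Nonempty), l e

/-- Heightened evolutionary distinctiveness (HED) of species `i`:
the expected marginal contribution of `i` to phylogenetic diversity, under
independent extinctions with extinction probabilities `ε`. -/
noncomputable def psi {X E : Type*} [Fintype X] [Fintype E] [DecidableEq X]
    (l : E → ℝ) (C : E → Finset X) (ε : X → ℝ) (i : X) : ℝ :=
  ∑ S ∈ ((univ : Finset X) \ {i}).powerset,
    ((∏ j ∈ S, (1 - ε j)) * ∏ j ∈ ((univ : Finset X) \ {i}) \ S, ε j) *
      (PD l C (S ∪ {i}) - PD l C S)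

lemma sum_indep {X : Type*} [DecidableEq X] (ε : X → ℝ) (A B : Finset X) (hB : B ⊆ A) :
    ∑ S ∈ A.powerset.filter (fun S => B ∩ S = ∅),
      (∏ j ∈ S, (1 - ε j)) * ∏ j ∈ A \ S, ε j = ∏ j ∈ B, ε j := by
  classical
  have hfe : A.powerset.filter (fun S => B ∩ S = ∅) = (A \ B).powerset := by
    ext S
    simp only [mem_filter, mem_powerset, subset_sdiff, ← disjoint_iff_inter_eq_empty,
      disjoint_comm (a := B)]
  rw [hfe]
  have key : ∀ S ∈ (A \ B).powerset, (∏ j ∈ S, (1 - ε j)) * ∏ j ∈ A \ S, ε j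
      = (∏ j ∈ B, ε j) * ((∏ j ∈ S, (1 - ε j)) * ∏ j ∈ (A \ B) \ S, ε j) := by
    intro S hS
    rw [mem_powerset] at hS
    have hAS : A \ S = B ∪ ((A \ B) \ S) := by
      ext x
      simp only [mem_sdiff, mem_union]
      constructor
      · rintro ⟨hA, hS'⟩
        by_cases hxB : x ∈ B
        · exact Or.inl hxB
        · exact Or.inr ⟨⟨hA, hxB⟩, hS'⟩
      · rintro (hxB | ⟨⟨hA, _⟩, hS'⟩)
        · refine ⟨hB hxB, fun hx => ?_⟩
          exact (mem_sdiff.mp (hS hx)).2 hxB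
        · exact ⟨hA, hS'⟩
    rw [hAS, prod_union (disjoint_left.mpr
      (fun x hxB hx => (mem_sdiff.mp (mem_sdiff.mp hx).1).2 hxB))]
    ring
  rw [sum_congr rfl key, ← mul_sum, ← prod_add]
  simp

/-- Theorem 1: the rooted HED index formula
`ψ_i = Σ_{e : i ∈ C(e)} l(e) · Π_{j ∈ C(e) \ {i}} ε_j`. -/
theorem rooted_HED_formula {X E : Type*} [Fintype X] [Fintype E] [DecidableEq X]
    (l : E → ℝ) (C : E → Finset X) (ε : X → ℝ) (i : X) :
    psi l C ε i =
      ∑ e ∈ univ.filter (fun e => i ∈ C e), l e * ∏ j ∈ C e \ {i}, ε j := by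
  classical
  have pd_diff : ∀ S : Finset X, i ∉ S →
      PD l C (S ∪ {i}) - PD l C S
        = ∑ e ∈ univ.filter (fun e => i ∈ C e ∧ C e ∩ S = ∅), l e := by
    intro S hS
    unfold PD
    have hsplit : (univ.filter (fun e : E => (C e ∩ (S ∪ {i})).Nonempty))
        = univ.filter (fun e => (C e ∩ S).Nonempty)
          ∪ univ.filter (fun e => i ∈ C e ∧ C e ∩ S = ∅) := by
      ext e
      simp only [mem_filter, mem_union, mem_univ, true_and]
      constructor
      · rintro ⟨x, hx⟩
        simp only [mem_inter, mem_union, mem_singleton] at hx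
        by_cases h : (C e ∩ S).Nonempty
        · exact Or.inl h
        · refine Or.inr ⟨?_, not_nonempty_iff_eq_empty.mp h⟩
          rcases hx.2 with hxS | rfl
          · exact absurd ⟨x, mem_inter.mpr ⟨hx.1, hxS⟩⟩ h
          · exact hx.1
      · rintro (⟨x, hx⟩ | ⟨h1, _⟩)
        · exact ⟨x, by simp only [mem_inter, mem_union] at hx ⊢; exact ⟨hx.1, Or.inl hx.2⟩⟩
        · exact ⟨i, by simp [h1]⟩
    have hdisj : Disjoint (univ.filter (fun e : E => (C e ∩ S).Nonempty))
        (univ.filter (fun e => i ∈ C e ∧ C e ∩ S = ∅)) := by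
      rw [disjoint_left]
      intro e he he'
      simp only [mem_filter] at he he'
      rw [he'.2.2] at he
      exact not_nonempty_empty he.2
    rw [hsplit, sum_union hdisj]
    ring
  unfold psi
  rw [sum_congr rfl (fun S hS => by
    rw [pd_diff S (by
      rw [mem_powerset, subset_sdiff] at hS
      exact fun h => (disjoint_left.mp hS.2) h (mem_singleton_self i))])]
  have step : ∀ S ∈ ((univ : Finset X) \ {i}).powerset,
      ((∏ j ∈ S, (1 - ε j)) * ∏ j ∈ ((univ : Finset X) \ {i}) \ S, ε j) *
        (∑ e ∈ univ.filter (fun e => i ∈ C e ∧ C e ∩ S = ∅), l e)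
      = ∑ e : E, if i ∈ C e ∧ C e ∩ S = ∅ then
          ((∏ j ∈ S, (1 - ε j)) * ∏ j ∈ ((univ : Finset X) \ {i}) \ S, ε j) * l e else 0 := by
    intro S _
    rw [mul_sum, sum_filter]
  rw [sum_congr rfl step, Finset.sum_comm]
  rw [show (univ.filter (fun e => i ∈ C e)).sum (fun e => l e * ∏ j ∈ C e \ {i}, ε j)
      = ∑ e : E, if i ∈ C e then l e * ∏ j ∈ C e \ {i}, ε j else 0 from (sum_filter _ _)]
  refine sum_congr rfl (fun e _ => ?_)
  by_cases hie : i ∈ C e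
  · simp only [hie, if_true, true_and]
    have : ∀ S ∈ ((univ : Finset X) \ {i}).powerset,
        (if C e ∩ S = ∅ then
          ((∏ j ∈ S, (1 - ε j)) * ∏ j ∈ ((univ : Finset X) \ {i}) \ S, ε j) * l e else 0)
        = (if (C e \ {i}) ∩ S = ∅ then
          ((∏ j ∈ S, (1 - ε j)) * ∏ j ∈ ((univ : Finset X) \ {i}) \ S, ε j) else 0) * l e := by
      intro S hS
      rw [mem_powerset, subset_sdiff] at hS
      have hiS : i ∉ S := fun h => (disjoint_left.mp hS.2) h (mem_singleton_self i)
      have : C e ∩ S = (C e \ {i}) ∩ S := by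
        ext x
        simp only [mem_inter, mem_sdiff, mem_singleton]
        constructor
        · rintro ⟨h1, h2⟩; exact ⟨⟨h1, fun h => hiS (h ▸ h2)⟩, h2⟩
        · rintro ⟨⟨h1, _⟩, h2⟩; exact ⟨h1, h2⟩
      rw [this]
      split <;> ring
    rw [sum_congr rfl this, ← sum_mul, ← sum_filter, sum_indep ε _ _
      (sdiff_subset_sdiff (subset_univ _) subset_rfl)]
    ring
  · simp only [hie, if_false, false_and]
    simp
end

section
/- For every leaf i ∈ X, the heightened evolutionary distinctiveness satisfies ψ_i = Σ_{e ∈ E} l(e) · (∏_{j ∈ C_i(e) ∖ {i}} ε_j) · (1 − ∏_{j ∈ X ∖ C_i(e)} ε_j) (where an empty product equals 1). (Theorem 2: formula for the unrooted HED index.) -/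
/-! Split `PD` edge by edge. For an edge whose side `A` contains `i`, adding `i` to a set `S` of
survivors makes the edge count exactly when `S` is a nonempty subset of the far side `X \ A`.
Under independent extinctions this event has probability
`(∏_{A \ {i}} ε) · (1 - ∏_{X \ A} ε)`: everything on the near side other than `i` dies, and
not everything on the far side does. -/

open Finset

/-- Unrooted phylogenetic diversity: the sum of the lengths of edges `e` whose
induced split `{σ e, X \ σ e}` has both sides meeting `S`. -/
noncomputable def PDu {X E : Type*} [Fintype X] [Fintype E] [DecidableEq X]
    (l : E → ℝ) (σ : E → Finset X) (S : Finset X) : ℝ :=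
  ∑ e ∈ univ.filter
      (fun e => (σ e ∩ S).Nonempty ∧ (((univ : Finset X) \ σ e) ∩ S).Nonempty), l e

/-- The side of the split of edge `e` containing leaf `i`. -/
def sideOf {X E : Type*} [Fintype X] [DecidableEq X]
    (σ : E → Finset X) (i : X) (e : E) : Finset X :=
  if i ∈ σ e then σ e else (univ : Finset X) \ σ e

/-- Heightened evolutionary distinctiveness (HED) of species `i` on an unrooted
tree: the expected marginal contribution of `i` to phylogenetic diversity under
independent extinctions with extinction probabilities `ε`. -/
noncomputable def psiU {X E : Type*} [Fintype X] [Fintype E] [DecidableEq X]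
    (l : E → ℝ) (σ : E → Finset X) (ε : X → ℝ) (i : X) : ℝ :=
  ∑ S ∈ ((univ : Finset X) \ {i}).powerset,
    ((∏ j ∈ S, (1 - ε j)) * ∏ j ∈ ((univ : Finset X) \ {i}) \ S, ε j) *
      (PDu l σ (S ∪ {i}) - PDu l σ S)

section Survival

variable {X : Type*} [DecidableEq X]

/-- `P_i(S)` is `survivalProb ε (univ \ {i}) S`. -/
def survivalProb (ε : X → ℝ) (B S : Finset X) : ℝ :=
  (∏ j ∈ S, (1 - ε j)) * ∏ j ∈ B \ S, ε j

theorem sum_powerset_survivalProb (ε : X → ℝ) (B : Finset X) :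
    ∑ S ∈ B.powerset, survivalProb ε B S = 1 := by
  simpa [survivalProb] using (prod_add (fun j => 1 - ε j) ε B).symm

theorem survivalProb_eq_mul_of_subset (ε : X → ℝ) {B C S : Finset X} (hSC : S ⊆ C)
    (hCB : C ⊆ B) : survivalProb ε B S = (∏ j ∈ B \ C, ε j) * survivalProb ε C S := by
  have hsplit : (B \ S) \ (C \ S) = B \ C := by
    ext x
    have := @hSC x
    simp only [mem_sdiff]
    tauto
  rw [survivalProb, survivalProb, ← prod_sdiff (sdiff_subset_sdiff hCB subset_rfl), hsplit]
  ring

theorem sum_powerset_survivalProb_of_subset (ε : X → ℝ) {B C : Finset X} (hCB : C ⊆ B) :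
    ∑ S ∈ C.powerset, survivalProb ε B S = ∏ j ∈ B \ C, ε j := by
  rw [sum_congr rfl fun S hS => survivalProb_eq_mul_of_subset ε (mem_powerset.1 hS) hCB,
    ← mul_sum, sum_powerset_survivalProb, mul_one]

theorem sum_survivalProb_nonempty_subsets (ε : X → ℝ) {B C : Finset X} (hCB : C ⊆ B) :
    ∑ S ∈ B.powerset with S ⊆ C ∧ S.Nonempty, survivalProb ε B S =
      (∏ j ∈ B \ C, ε j) * (1 - ∏ j ∈ C, ε j) := by
  have hfilter : {S ∈ B.powerset | S ⊆ C ∧ S.Nonempty} = C.powerset.erase ∅ := by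
    ext S
    simp only [mem_filter, mem_powerset, mem_erase, nonempty_iff_ne_empty]
    exact ⟨fun ⟨_, hSC, hS⟩ => ⟨hS, hSC⟩, fun ⟨hS, hSC⟩ => ⟨hSC.trans hCB, hSC, hS⟩⟩
  rw [hfilter, sum_erase_eq_sub (empty_mem_powerset C), sum_powerset_survivalProb_of_subset ε hCB,
    survivalProb, prod_empty, sdiff_empty, one_mul, ← prod_sdiff hCB]
  ring

end Survival

section Splits

variable {X : Type*} [Fintype X] [DecidableEq X]

abbrev Separates (A T : Finset X) : Prop :=
  (A ∩ T).Nonempty ∧ ((univ \ A) ∩ T).Nonempty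

theorem separates_univ_sdiff_iff {A T : Finset X} : Separates (univ \ A) T ↔ Separates A T := by
  rw [Separates, Separates, sdiff_sdiff_self_left, univ_inter, and_comm]

theorem separates_union_singleton_iff {A S : Finset X} {i : X} (hi : i ∈ A) :
    Separates A (S ∪ {i}) ↔ ((univ \ A) ∩ S).Nonempty := by
  have hfar : (univ \ A) ∩ (S ∪ {i}) = (univ \ A) ∩ S := by
    rw [inter_union_distrib_left, union_eq_left]
    simp [hi]
  exact ⟨fun h => hfar ▸ h.2, fun h => ⟨⟨i, by simp [hi]⟩, hfar ▸ h⟩⟩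

theorem ite_separates_union_singleton_sub {A S : Finset X} {i : X} (hi : i ∈ A) (c : ℝ) :
    ((if Separates A (S ∪ {i}) then c else 0) - if Separates A S then c else 0) =
      if S ⊆ univ \ A ∧ S.Nonempty then c else 0 := by
  rw [if_congr (separates_union_singleton_iff hi) rfl rfl]
  by_cases hSA : S ⊆ univ \ A
  · have hnear : A ∩ S = ∅ := by
      rw [← disjoint_iff_inter_eq_empty, disjoint_comm]
      exact (subset_sdiff.1 hSA).2
    simp [hnear, inter_eq_right.2 hSA, hSA]
  · have hnear : (A ∩ S).Nonempty := by
      obtain ⟨x, hxS, hxA⟩ := not_subset.1 hSA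
      exact ⟨x, mem_inter.2 ⟨by simpa using hxA, hxS⟩⟩
    simp [Separates, hnear, hSA]

theorem mem_sideOf {E : Type*} (σ : E → Finset X) (i : X) (e : E) : i ∈ sideOf σ i e := by
  unfold sideOf
  split_ifs with h <;> simp [h]

theorem PDu_eq_sum_ite_separates_sideOf {E : Type*} [Fintype E] (l : E → ℝ) (σ : E → Finset X)
    (i : X) (S : Finset X) :
    PDu l σ S = ∑ e, if Separates (sideOf σ i e) S then l e else 0 := by
  rw [PDu, sum_filter]
  refine sum_congr rfl fun e _ => if_congr ?_ rfl rfl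
  unfold sideOf
  split_ifs
  · rfl
  · exact separates_univ_sdiff_iff.symm

theorem sum_survivalProb_mul_ite_separates_sub {A : Finset X} {i : X} (hi : i ∈ A)
    (ε : X → ℝ) (c : ℝ) :
    ∑ S ∈ (univ \ {i}).powerset, survivalProb ε (univ \ {i}) S *
        ((if Separates A (S ∪ {i}) then c else 0) - if Separates A S then c else 0) =
      c * (∏ j ∈ A \ {i}, ε j) * (1 - ∏ j ∈ univ \ A, ε j) := by
  have hfar : univ \ A ⊆ univ \ {i} := sdiff_subset_sdiff subset_rfl (by simpa using hi)
  have hnear : (univ \ {i}) \ (univ \ A) = A \ {i} := by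
    ext x
    simp only [mem_sdiff, mem_univ, true_and, not_not]
    tauto
  simp only [ite_separates_union_singleton_sub hi, mul_ite, mul_zero]
  rw [← sum_filter, ← sum_mul, sum_survivalProb_nonempty_subsets ε hfar, hnear]
  ring

end Splits

/-- Theorem 2: the unrooted HED index formula
`ψ_i = Σ_e l(e) · (Π_{j ∈ C_i(e) \ {i}} ε_j) · (1 − Π_{j ∈ X \ C_i(e)} ε_j)`. -/
theorem unrooted_HED_formula {X E : Type*} [Fintype X] [Fintype E] [DecidableEq X]
    (l : E → ℝ) (σ : E → Finset X) (ε : X → ℝ) (i : X) :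
    psiU l σ ε i =
      ∑ e ∈ (univ : Finset E),
        l e * (∏ j ∈ sideOf σ i e \ {i}, ε j) *
          (1 - ∏ j ∈ (univ : Finset X) \ sideOf σ i e, ε j) := by
  change ∑ S ∈ (univ \ {i}).powerset, survivalProb ε (univ \ {i}) S * _ = _
  simp only [PDu_eq_sum_ite_separates_sideOf l σ i, ← sum_sub_distrib, mul_sum]
  rw [sum_comm]
  exact sum_congr rfl fun e _ => sum_survivalProb_mul_ite_separates_sub (mem_sideOf σ i e) ε (l e)
end

section
/- Suppose E is nonempty and every split is nontrivial, i.e. for every e ∈ E both σ(e) and X ∖ σ(e) are nonempty. Then for every choice of positive edge lengths l : E → (0, ∞) there exists an assignment of extinction probabilities ε : X → (0, 1) such that Σ_{i ∈ X} ψ_i ≠ PD(X). (There is no unrooted phylogenetic tree for which the Pareto condition holds for all positive branch lengths and ε values.) -/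
open Finset

lemma PDu_empty {X E : Type*} [Fintype X] [Fintype E] [DecidableEq X]
    (l : E → ℝ) (σ : E → Finset X) : PDu l σ (∅ : Finset X) = 0 := by
  simp [PDu]

lemma PDu_singleton {X E : Type*} [Fintype X] [Fintype E] [DecidableEq X]
    (l : E → ℝ) (σ : E → Finset X) (i : X) : PDu l σ ({i} : Finset X) = 0 := by
  unfold PDu
  rw [Finset.filter_false_of_mem, Finset.sum_empty]
  rintro e _ ⟨⟨x, hx⟩, ⟨y, hy⟩⟩
  rw [Finset.mem_inter, Finset.mem_singleton] at hx hy
  rcases hx with ⟨hx1, rfl⟩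
  rcases hy with ⟨hy1, rfl⟩
  rw [Finset.mem_sdiff] at hy1
  exact hy1.2 hx1

lemma psiU_one {X E : Type*} [Fintype X] [Fintype E] [DecidableEq X]
    (l : E → ℝ) (σ : E → Finset X) (i : X) :
    psiU l σ (fun _ => (1 : ℝ)) i = 0 := by
  unfold psiU
  apply Finset.sum_eq_zero
  intro S hS
  rcases S.eq_empty_or_nonempty with rfl | ⟨x, hx⟩
  · simp [PDu_empty, PDu_singleton]
  · have : ∏ j ∈ S, ((1 : ℝ) - 1) = 0 := by
      apply Finset.prod_eq_zero hx; ring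
    rw [this, zero_mul, zero_mul]

/-- On an unrooted tree (with at least one edge, all splits nontrivial) the
Pareto condition fails for some choice of extinction probabilities, whatever
the positive branch lengths are. -/
theorem no_unrooted_pareto {X E : Type*} [Fintype X] [Fintype E] [DecidableEq X]
    (σ : E → Finset X) (hE : Nonempty E)
    (hσ : ∀ e, (σ e).Nonempty ∧ ((univ : Finset X) \ σ e).Nonempty) :
    ∀ l : E → ℝ, (∀ e, 0 < l e) →
      ∃ ε : X → ℝ, (∀ j, 0 < ε j ∧ ε j < 1) ∧
        ∑ i : X, psiU l σ ε i ≠ PDu l σ (univ : Finset X) := by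
  intro l hl
  by_contra h
  push_neg at h
  set c := PDu l σ (univ : Finset X) with hc_def
  have hc : 0 < c := by
    have hfil : (univ.filter
        (fun e => (σ e ∩ (univ : Finset X)).Nonempty ∧
          (((univ : Finset X) \ σ e) ∩ (univ : Finset X)).Nonempty) : Finset E) = univ := by
      apply Finset.filter_true_of_mem
      intro e _
      constructor
      · simpa using (hσ e).1
      · simpa using (hσ e).2
    rw [hc_def]
    unfold PDu
    rw [hfil]
    exact Finset.sum_pos (fun e _ => hl e) (Finset.univ_nonempty)
  set f : ℝ → ℝ := fun t => ∑ i : X, psiU l σ (fun _ => t) i with hf_def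
  have hf : Continuous f := by
    apply continuous_finset_sum
    intro i _
    unfold psiU
    apply continuous_finset_sum
    intro S _
    apply Continuous.mul _ continuous_const
    apply Continuous.mul
    · exact continuous_finset_prod _ (fun j _ => by continuity)
    · exact continuous_finset_prod _ (fun j _ => continuous_id)
  have h1 : f 1 = 0 := by
    rw [hf_def]
    simp only [psiU_one, Finset.sum_const_zero]
  have hne : (nhdsWithin (1 : ℝ) (Set.Ioo 0 1)).NeBot := by
    rw [← mem_closure_iff_nhdsWithin_neBot, closure_Ioo (by norm_num : (0:ℝ) ≠ 1)]
    exact Set.right_mem_Icc.2 (by norm_num)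
  have t2 : Filter.Tendsto f (nhdsWithin (1 : ℝ) (Set.Ioo 0 1)) (nhds (f 1)) :=
    (hf.continuousAt).continuousWithinAt
  have t3 : Filter.Tendsto f (nhdsWithin (1 : ℝ) (Set.Ioo 0 1)) (nhds c) := by
    apply Filter.Tendsto.congr' _ tendsto_const_nhds
    apply eventually_nhdsWithin_of_forall
    intro t ht
    exact (h (fun _ => t) (fun j => ⟨ht.1, ht.2⟩)).symm
  have := tendsto_nhds_unique t2 t3
  rw [h1] at this
  exact absurd this hc.ne
end

section
/- For every leaf i ∈ X and every subset S ⊆ X ∖ {i}, the marginal contribution of i satisfies PD(S ∪ {i}) − PD(S) = Σ_{e ∈ E with i ∈ C(e) and C(e) ∩ S = ∅} l(e). (Key structural lemma in the proof of Theorem 1: an edge contributes to the marginal increase in rooted PD exactly when it lies above i and no member of S is descended from it.) -/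
open Finset

/-- An edge contributes to the marginal increase in rooted PD exactly when it
lies above `i` and no member of `S` is descended from it. -/
theorem rooted_marginal_gain {X E : Type*} [Fintype X] [Fintype E] [DecidableEq X]
    (l : E → ℝ) (C : E → Finset X) (i : X) (S : Finset X)
    (hS : S ⊆ univ \ {i}) :
    PD l C (S ∪ {i}) - PD l C S =
      ∑ e ∈ univ.filter (fun e => i ∈ C e ∧ C e ∩ S = ∅), l e := by
  classical
  have hsplit :
      (univ.filter (fun e => (C e ∩ (S ∪ {i})).Nonempty)) =
        (univ.filter (fun e => (C e ∩ S).Nonempty)) ∪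
          (univ.filter (fun e => i ∈ C e ∧ C e ∩ S = ∅)) := by
    ext e
    simp only [mem_filter, mem_univ, true_and, Finset.Nonempty, mem_union, mem_inter,
      mem_singleton]
    constructor
    · rintro ⟨x, hxC, hx | rfl⟩
      · exact Or.inl ⟨x, hxC, hx⟩
      · by_cases hS' : ∃ x, x ∈ C e ∧ x ∈ S
        · exact Or.inl hS'
        · refine Or.inr ⟨hxC, ?_⟩
          rw [← not_nonempty_iff_eq_empty]
          rintro ⟨y, hy⟩
          rw [mem_inter] at hy
          exact hS' ⟨y, hy.1, hy.2⟩
    · rintro (⟨x, hxC, hx⟩ | ⟨h1, _⟩)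
      · exact ⟨x, hxC, Or.inl hx⟩
      · exact ⟨i, h1, Or.inr rfl⟩
  have hdisj : Disjoint (univ.filter (fun e => (C e ∩ S).Nonempty))
      (univ.filter (fun e => i ∈ C e ∧ C e ∩ S = ∅)) := by
    rw [disjoint_filter]
    rintro e _ h ⟨_, h2⟩
    rw [h2] at h
    exact not_nonempty_empty h
  unfold PD
  rw [hsplit, sum_union hdisj]
  ring
end

section
/- For every leaf i ∈ X and every subset S ⊆ X ∖ {i}, the marginal contribution of i satisfies PD(S ∪ {i}) − PD(S) = Σ_{e ∈ E with C_i(e) ∩ S = ∅ and (X ∖ C_i(e)) ∩ S ≠ ∅} l(e). (Key structural lemma in the proof of Theorem 2: an edge contributes to the marginal increase in unrooted PD exactly when S contains no element on i's side of the split but contains at least one element on the other side.) -/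
open Finset

/-- An edge contributes to the marginal increase in unrooted PD exactly when
`S` contains no element on `i`'s side of the split but contains at least one
element on the other side. -/
theorem unrooted_marginal_gain {X E : Type*} [Fintype X] [Fintype E] [DecidableEq X]
    (l : E → ℝ) (σ : E → Finset X) (i : X) (S : Finset X)
    (hS : S ⊆ univ \ {i}) :
    PDu l σ (S ∪ {i}) - PDu l σ S =
      ∑ e ∈ univ.filter
          (fun e => sideOf σ i e ∩ S = ∅ ∧
            (((univ : Finset X) \ sideOf σ i e) ∩ S).Nonempty), l e := by
  classical
  have hi : i ∉ S := by
    intro h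
    have := hS h
    simp at this
  set A := univ.filter
      (fun e : E => (σ e ∩ (S ∪ {i})).Nonempty ∧
        (((univ : Finset X) \ σ e) ∩ (S ∪ {i})).Nonempty) with hA
  set B := univ.filter
      (fun e : E => (σ e ∩ S).Nonempty ∧ (((univ : Finset X) \ σ e) ∩ S).Nonempty) with hB
  have hBA : B ⊆ A := by
    intro e he
    simp only [hA, hB, mem_filter, mem_univ, true_and] at he ⊢
    obtain ⟨⟨x, hx⟩, ⟨y, hy⟩⟩ := he
    simp only [mem_inter, mem_union] at hx hy
    exact ⟨⟨x, by simp [mem_inter, mem_union, hx.1, hx.2]⟩,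
      ⟨y, by simp only [mem_inter, mem_union, mem_sdiff] at *; tauto⟩⟩
  have key : A \ B = univ.filter
      (fun e : E => sideOf σ i e ∩ S = ∅ ∧
        (((univ : Finset X) \ sideOf σ i e) ∩ S).Nonempty) := by
    ext e
    simp only [hA, hB, mem_sdiff, mem_filter, mem_univ, true_and, sideOf,
      not_and_or, ← Finset.not_nonempty_iff_eq_empty]
    constructor
    · rintro ⟨⟨h1, h2⟩, h3⟩
      by_cases hie : i ∈ σ e
      · simp only [if_pos hie]
        rcases h3 with h3 | h3
        · refine ⟨h3, ?_⟩
          obtain ⟨y, hy⟩ := h2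
          simp only [mem_inter, mem_union, mem_sdiff, mem_singleton] at hy
          rcases hy.2 with hy2 | hy2
          · exact ⟨y, by simp [mem_inter, hy.1, hy2]⟩
          · exact absurd (hy2 ▸ hy.1) (by simp [hie])
        · exfalso
          obtain ⟨y, hy⟩ := h2
          simp only [mem_inter, mem_union, mem_sdiff, mem_singleton, mem_univ,
            true_and] at hy
          rcases hy.2 with hy2 | hy2
          · exact h3 ⟨y, by simp [mem_inter, mem_sdiff, hy.1, hy2]⟩
          · exact hy.1 (hy2 ▸ hie)
      · simp only [if_neg hie]
        rcases h3 with h3 | h3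
        · exfalso
          obtain ⟨y, hy⟩ := h1
          simp only [mem_inter, mem_union, mem_singleton] at hy
          rcases hy.2 with hy2 | hy2
          · exact h3 ⟨y, by simp [mem_inter, hy.1, hy2]⟩
          · exact hie (hy2 ▸ hy.1)
        · refine ⟨h3, ?_⟩
          obtain ⟨y, hy⟩ := h1
          simp only [mem_inter, mem_union, mem_singleton] at hy
          rcases hy.2 with hy2 | hy2
          · refine ⟨y, ?_⟩
            simp only [mem_inter, mem_sdiff, mem_univ, true_and]
            exact ⟨by simp [hy.1], hy2⟩
          · exact absurd (hy2 ▸ hy.1) hie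
    · by_cases hie : i ∈ σ e
      · simp only [if_pos hie]
        rintro ⟨h1, h2⟩
        obtain ⟨y, hy⟩ := h2
        simp only [mem_inter, mem_sdiff, mem_univ, true_and] at hy
        refine ⟨⟨⟨i, by simp [mem_inter, hie]⟩,
          ⟨y, by simp [mem_inter, mem_union, mem_sdiff, hy.1, hy.2]⟩⟩, Or.inl h1⟩
      · simp only [if_neg hie]
        rintro ⟨h1, h2⟩
        obtain ⟨y, hy⟩ := h2
        simp only [mem_inter, mem_sdiff, mem_univ, true_and, not_not,
          not_and, not_not] at hy
        have hyσ : y ∈ σ e := hy.1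
        refine ⟨⟨⟨y, by simp [mem_inter, mem_union, hyσ, hy.2]⟩,
          ⟨i, by simp [mem_inter, mem_union, mem_sdiff, hie]⟩⟩, ?_⟩
        right
        intro ⟨z, hz⟩
        simp only [mem_inter, mem_sdiff, mem_univ, true_and] at hz
        exact h1 ⟨z, by simp [mem_inter, hz.1, hz.2]⟩
  rw [PDu, PDu, ← hA, ← hB, ← Finset.sum_sdiff_eq_sub hBA, key]
end
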